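/- arXiv:2503.01766 — 3 statements merged into one kernel-verified Lean document; each statement's English description precedes it below -/
import Mathlib

section
/- For probability distributions P, R, Q admitting densities and for any ε₁, ε₂ ≥ 0, the Hockey-Stick divergence satisfies the weak triangle inequality D_{e^{ε₁+ε₂}}(P‖Q) ≤ D_{e^{ε₁}}(P‖R) + e^{ε₁} · D_{e^{ε₂}}(R‖Q). -/
open MeasureTheory

/-- Weak triangle inequality for the Hockey-Stick divergence:
`D_{e^{ε₁+ε₂}}(P‖Q) ≤ D_{e^{ε₁}}(P‖R) + e^{ε₁} D_{e^{ε₂}}(R‖Q)`,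
with the divergences expressed via densities. -/
theorem stmt_1 {α : Type*} [MeasurableSpace α] (μ : Measure α)
    (ε₁ ε₂ : ℝ) (hε₁ : 0 ≤ ε₁) (hε₂ : 0 ≤ ε₂)
    (p r q : α → ℝ)
    (hp0 : ∀ x, 0 ≤ p x) (hr0 : ∀ x, 0 ≤ r x) (hq0 : ∀ x, 0 ≤ q x)
    (hp1 : ∫ x, p x ∂μ = 1) (hr1 : ∫ x, r x ∂μ = 1) (hq1 : ∫ x, q x ∂μ = 1)
    (hpq : Integrable (fun x => |p x - Real.exp (ε₁ + ε₂) * q x|) μ)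
    (hpr : Integrable (fun x => |p x - Real.exp ε₁ * r x|) μ)
    (hrq : Integrable (fun x => |r x - Real.exp ε₂ * q x|) μ) :
    (1 / 2) * ∫ x, |p x - Real.exp (ε₁ + ε₂) * q x| ∂μ - (1 / 2) * (Real.exp (ε₁ + ε₂) - 1) ≤
      ((1 / 2) * ∫ x, |p x - Real.exp ε₁ * r x| ∂μ - (1 / 2) * (Real.exp ε₁ - 1)) +
        Real.exp ε₁ *
          ((1 / 2) * ∫ x, |r x - Real.exp ε₂ * q x| ∂μ - (1 / 2) * (Real.exp ε₂ - 1)) := by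
  have E : Real.exp (ε₁ + ε₂) = Real.exp ε₁ * Real.exp ε₂ := Real.exp_add ε₁ ε₂
  have key : ∫ x, |p x - Real.exp (ε₁ + ε₂) * q x| ∂μ ≤
      ∫ x, (|p x - Real.exp ε₁ * r x| + Real.exp ε₁ * |r x - Real.exp ε₂ * q x|) ∂μ := by
    refine integral_mono hpq (hpr.add (hrq.const_mul _)) fun x => ?_
    have h1 : p x - Real.exp (ε₁ + ε₂) * q x =
        (p x - Real.exp ε₁ * r x) + Real.exp ε₁ * (r x - Real.exp ε₂ * q x) := by
      rw [E]; ring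
    calc |p x - Real.exp (ε₁ + ε₂) * q x|
        ≤ |p x - Real.exp ε₁ * r x| + |Real.exp ε₁ * (r x - Real.exp ε₂ * q x)| := by
          rw [h1]; exact abs_add_le _ _
      _ = |p x - Real.exp ε₁ * r x| + Real.exp ε₁ * |r x - Real.exp ε₂ * q x| := by
          rw [abs_mul, abs_of_pos (Real.exp_pos ε₁)]
  rw [integral_add hpr (hrq.const_mul _), MeasureTheory.integral_const_mul] at key
  nlinarith [key, E, Real.exp_pos ε₁]
end

section
/- Let z₁ be the first coordinate of a uniform random point on S^{n₂−1}, with density f(t) ∝ (1−t²)^{(n₂−3)/2} on [−1,1], and let T := c·z₁ for a constant c with sqrt(1−γ) ≤ c ≤ 1/sqrt(1−γ), where γ := 8e²λ₀/n₂ ≤ ε/4 ≤ 1/4 and λ₀ ≥ 1, ε ∈ (0,1]. Then for every t with |t| ≤ sqrt((2/3)·ε/(ε + 16e²λ₀)), the point t is in the support of T and the log-density ratio satisfies ln(f_{z₁}(t)/f_T(t)) ≤ ε/2. -/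
/-!
The log-density ratio splits as `log c + p · (log (1 - t²) - log (1 - (t/c)²))` with
`p = (n₂ - 3)/2`. Both pieces are controlled by `log x ≤ x - 1`: the scale gives
`log c ≤ γ / (2(1 - γ)) ≤ ε/6`, and, since `c² ≥ 1 - γ`, the bracket is at most
`t²γ / (1 - γ - t²)`. As `p γ ≤ n₂ γ / 2 = 4e²λ₀` and the window on `t` forces
`24 e²λ₀ t² ≤ ε`, the second piece is at most `ε/3`.
-/

open Real

lemma log_le_of_le_inv_sqrt_one_sub {γ c : ℝ} (hγ : γ < 1) (hc : 0 < c)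
    (h : c ≤ (√(1 - γ))⁻¹) : log c ≤ γ / (2 * (1 - γ)) := by
  have h1γ : 0 < 1 - γ := by linarith
  have hlog : log c ≤ -(log (1 - γ) / 2) := by
    simpa only [log_inv, log_sqrt h1γ.le] using log_le_log hc h
  have hinv : (1 - γ)⁻¹ = 1 + γ / (1 - γ) := by field_simp; ring
  have := one_sub_inv_le_log_of_pos h1γ
  rw [hinv] at this
  linarith [show γ / (2 * (1 - γ)) = γ / (1 - γ) / 2 by rw [div_div, mul_comm]]

lemma log_sub_log_le_div {u v : ℝ} (hu : 0 < u) (hv : 0 < v) :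
    log v - log u ≤ (v - u) / u := by
  have := log_le_sub_one_of_pos (div_pos hv hu)
  rwa [log_div hv.ne' hu.ne', div_sub_one hu.ne'] at this

lemma log_one_sub_sub_log_one_sub_div_le {a s γ : ℝ} (ha : 0 ≤ a) (hγ : 0 ≤ γ)
    (hs : 1 - γ ≤ s) (haγ : a < 1 - γ) :
    log (1 - a) - log (1 - a / s) ≤ a * γ / (1 - γ - a) := by
  have hs0 : 0 < s := by linarith
  have has : 0 < 1 - a / s := by rw [sub_pos, div_lt_one hs0]; linarith
  calc log (1 - a) - log (1 - a / s) ≤ ((1 - a) - (1 - a / s)) / (1 - a / s) :=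
        log_sub_log_le_div has (by linarith)
    _ = a * (1 - s) / (s - a) := by field_simp; ring
    _ ≤ a * γ / (1 - γ - a) :=
        div_le_div₀ (mul_nonneg ha hγ) (by nlinarith) (by linarith) (by linarith)

lemma log_mul_rpow_div_inv_mul_mul_rpow {C c a b : ℝ} (p : ℝ) (hC : 0 < C) (hc : 0 < c)
    (ha : 0 < a) (hb : 0 < b) :
    log (C * a ^ p / (c⁻¹ * (C * b ^ p))) = log c + p * (log a - log b) := by
  have hbp : 0 < b ^ p := rpow_pos_of_pos hb p
  rw [show C * a ^ p / (c⁻¹ * (C * b ^ p)) = c * (a ^ p / b ^ p) by field_simp,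
    log_mul hc.ne' (by positivity), log_div (by positivity) hbp.ne', log_rpow ha, log_rpow hb,
    mul_sub]

lemma abs_div_lt_one_and_log_add_mul_log_sub_le {γ ε c t p K : ℝ} (hγ0 : 0 ≤ γ)
    (hγ : γ ≤ ε / 4) (hε1 : ε ≤ 1) (hc1 : √(1 - γ) ≤ c) (hc2 : c ≤ (√(1 - γ))⁻¹)
    (hp : 0 ≤ p) (hpγ : p * γ ≤ K / 2) (hKt : 3 * K * t ^ 2 ≤ ε) (ht : t ^ 2 ≤ 1 / 4) :
    |t / c| < 1 ∧ log c + p * (log (1 - t ^ 2) - log (1 - (t / c) ^ 2)) ≤ ε / 2 := by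
  have hc0 : 0 < c := (sqrt_pos.2 (by linarith)).trans_le hc1
  have hcsq : 1 - γ ≤ c ^ 2 := (sqrt_le_left hc0.le).1 hc1
  have htc : (t / c) ^ 2 < 1 := by rw [div_pow, div_lt_one (by positivity)]; linarith
  refine ⟨(sq_lt_one_iff_abs_lt_one _).1 htc, ?_⟩
  have hscale := log_le_of_le_inv_sqrt_one_sub (by linarith) hc0 hc2
  have hbracket := log_one_sub_sub_log_one_sub_div_le (sq_nonneg t) hγ0 hcsq (by linarith)
  rw [← div_pow] at hbracket
  calc log c + p * (log (1 - t ^ 2) - log (1 - (t / c) ^ 2))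
      ≤ γ / (2 * (1 - γ)) + p * (t ^ 2 * γ / (1 - γ - t ^ 2)) :=
        add_le_add hscale (mul_le_mul_of_nonneg_left hbracket hp)
    _ ≤ ε / 6 + ε / 3 := by
        refine add_le_add ?_ ?_
        · rw [div_le_iff₀ (by linarith)]; nlinarith
        · rw [mul_div_assoc', div_le_iff₀ (by linarith)]
          nlinarith [mul_le_mul_of_nonneg_right hpγ (sq_nonneg t)]
    _ = ε / 2 := by ring

/-- Univariate log-density-ratio bound: if `z₁` has density
`f(t) = C (1 - t²)^{(n₂-3)/2}` on `[-1, 1]` and `T = c·z₁` with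
`√(1-γ) ≤ c ≤ 1/√(1-γ)` where `γ = 8e²λ₀/n₂ ≤ ε/4`, then every `t` with
`|t| ≤ √((2/3)·ε/(ε + 16e²λ₀))` lies in the support of `T` and
`ln(f_{z₁}(t)/f_T(t)) ≤ ε/2`, where `f_T(t) = c⁻¹ f(t/c)`. -/
theorem stmt_8 (n₂ : ℕ) (hn₂ : 0 < n₂) (lam₀ ε c t C : ℝ)
    (hlam : 1 ≤ lam₀) (hε0 : 0 < ε) (hε1 : ε ≤ 1) (hC : 0 < C)
    (hγ : 8 * Real.exp 1 ^ 2 * lam₀ / n₂ ≤ ε / 4)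
    (hc1 : Real.sqrt (1 - 8 * Real.exp 1 ^ 2 * lam₀ / n₂) ≤ c)
    (hc2 : c ≤ (Real.sqrt (1 - 8 * Real.exp 1 ^ 2 * lam₀ / n₂))⁻¹)
    (ht : |t| ≤ Real.sqrt (2 / 3 * (ε / (ε + 16 * Real.exp 1 ^ 2 * lam₀)))) :
    |t / c| < 1 ∧
      Real.log ((C * (1 - t ^ 2) ^ (((n₂ : ℝ) - 3) / 2)) /
        (c⁻¹ * (C * (1 - (t / c) ^ 2) ^ (((n₂ : ℝ) - 3) / 2)))) ≤ ε / 2 := by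
  set γ := 8 * exp 1 ^ 2 * lam₀ / n₂ with hγ_def
  set p := ((n₂ : ℝ) - 3) / 2 with hp_def
  have hElam : 7 ≤ exp 1 ^ 2 * lam₀ := by nlinarith [exp_one_gt_d9]
  have hn : (0 : ℝ) < n₂ := by exact_mod_cast hn₂
  have hγ0 : 0 ≤ γ := div_nonneg (by linarith) hn.le
  have hnγ : (n₂ : ℝ) * γ = 8 * exp 1 ^ 2 * lam₀ := by rw [hγ_def]; field_simp
  have hp : 0 ≤ p := by nlinarith [mul_le_mul_of_nonneg_left (by linarith : γ ≤ 1 / 4) hn.le]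
  have hpγ : p * γ ≤ 8 * exp 1 ^ 2 * lam₀ / 2 := by nlinarith
  have ht2 : t ^ 2 * (ε + 16 * exp 1 ^ 2 * lam₀) ≤ 2 / 3 * ε := by
    have := (sq_le (by positivity)).2 (abs_le.1 ht)
    rwa [mul_div_assoc', le_div_iff₀ (by nlinarith)] at this
  have hKt : 3 * (8 * exp 1 ^ 2 * lam₀) * t ^ 2 ≤ ε := by nlinarith [sq_nonneg t]
  have hts : t ^ 2 ≤ 1 / 4 := by nlinarith [mul_le_mul_of_nonneg_right hElam (sq_nonneg t)]
  obtain ⟨htc, hlog⟩ :=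
    abs_div_lt_one_and_log_add_mul_log_sub_le hγ0 hγ hε1 hc1 hc2 hp hpγ hKt hts
  have hc0 : 0 < c := (sqrt_pos.2 (by linarith)).trans_le hc1
  refine ⟨htc, ?_⟩
  rwa [log_mul_rpow_div_inv_mul_mul_rpow _ hC hc0 (by linarith)
    (sub_pos.2 ((sq_lt_one_iff_abs_lt_one _).2 htc))]
end

section
/- Let d < n₂ − 2 and let f(x) ∝ (1 − ‖x‖²)^{(n₂−d)/2 − 1} on the unit ball of ℝ^d be the density of z_{≤d}, the first d coordinates of a uniform point on S^{n₂−1}. Fix ℓ ∈ ℝ^d with ‖ℓ‖ ≤ min{0.1, (ε/5)/√n₂} for some ε ∈ (0,1]. Then for every t ∈ ℝ^d with ‖t‖ ≤ 0.9 and |⟨t, ℓ⟩| ≤ ε/(50 n₂), both t and t − ℓ lie in the unit ball, and ln(f(t)/f(t − ℓ)) ≤ ε/2. -/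
/-!
With `p = (n₂ - d)/2 - 1`, the log-ratio is `p (log (1 - ‖t‖²) - log (1 - ‖t - ℓ‖²))`, and
`ln x ≤ x - 1` bounds it by `p (‖t - ℓ‖² - ‖t‖²) / (1 - ‖t - ℓ‖²)`. The numerator equals
`‖ℓ‖² - 2⟨t, ℓ⟩ ≤ ε²/(25 n₂) + ε/(25 n₂)`, which `p ≤ n₂/2` turns into at most `ε/25`, while
the denominator stays above `0.16`.
-/

open scoped RealInnerProductSpace

namespace Real

theorem log_sub_log_le_div {x y : ℝ} (hx : 0 < x) (hy : 0 < y) :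
    log x - log y ≤ (x - y) / y := by
  rw [← log_div hx.ne' hy.ne', sub_div, div_self hy.ne']
  exact log_le_sub_one_of_pos (div_pos hx hy)

end Real

section SphereMarginal

variable {E : Type*} [SeminormedAddGroup E]

noncomputable def sphereMarginalDensity (C p : ℝ) (x : E) : ℝ :=
  C * (1 - ‖x‖ ^ 2) ^ p

theorem log_sphereMarginalDensity_div_le {C p : ℝ} (hC : C ≠ 0) (hp : 0 ≤ p) {x y : E}
    (hx : ‖x‖ < 1) (hy : ‖y‖ < 1) :
    Real.log (sphereMarginalDensity C p x / sphereMarginalDensity C p y) ≤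
      p * ((‖y‖ ^ 2 - ‖x‖ ^ 2) / (1 - ‖y‖ ^ 2)) := by
  have hx' : 0 < 1 - ‖x‖ ^ 2 := by nlinarith [norm_nonneg x]
  have hy' : 0 < 1 - ‖y‖ ^ 2 := by nlinarith [norm_nonneg y]
  unfold sphereMarginalDensity
  rw [mul_div_mul_left _ _ hC, Real.log_div (Real.rpow_pos_of_pos hx' p).ne'
    (Real.rpow_pos_of_pos hy' p).ne', Real.log_rpow hx', Real.log_rpow hy', ← mul_sub]
  gcongr
  refine (Real.log_sub_log_le_div hx' hy').trans_eq ?_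
  ring

end SphereMarginal

theorem sq_norm_sub_sub_sq_norm_le {E : Type*} [NormedAddCommGroup E] [InnerProductSpace ℝ E]
    (t l : E) : ‖t - l‖ ^ 2 - ‖t‖ ^ 2 ≤ ‖l‖ ^ 2 + 2 * |⟪t, l⟫| := by
  rw [norm_sub_sq_real]
  linarith [neg_abs_le ⟪t, l⟫]

theorem mul_sq_le_of_le_div_sqrt {n a c : ℝ} (hn : 0 < n) (ha : 0 ≤ a) (h : a ≤ c / √n) :
    n * a ^ 2 ≤ c ^ 2 := by
  rw [le_div_iff₀ (Real.sqrt_pos.2 hn)] at h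
  calc n * a ^ 2 = (a * √n) ^ 2 := by rw [mul_pow, Real.sq_sqrt hn.le, mul_comm]
    _ ≤ c ^ 2 := pow_le_pow_left₀ (by positivity) h 2

/-- Multivariate log-density-ratio bound for the shifted projected sphere density
`f(x) = C (1 - ‖x‖²)^{(n₂-d)/2 - 1}`: if `‖ℓ‖ ≤ min{0.1, (ε/5)/√n₂}`, then for
every `t` with `‖t‖ ≤ 0.9` and `|⟨t, ℓ⟩| ≤ ε/(50 n₂)`, both `t` and `t - ℓ` lie
in the unit ball and `ln(f(t)/f(t - ℓ)) ≤ ε/2`. -/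
theorem stmt_14 (d n₂ : ℕ) (hd : d + 2 < n₂) (ε : ℝ) (hε0 : 0 < ε) (hε1 : ε ≤ 1)
    (C : ℝ) (hC : 0 < C)
    (l t : EuclideanSpace ℝ (Fin d))
    (hl : ‖l‖ ≤ min 0.1 (ε / 5 / Real.sqrt n₂))
    (ht : ‖t‖ ≤ 0.9) (hip : |⟪t, l⟫| ≤ ε / (50 * n₂)) :
    ‖t‖ < 1 ∧ ‖t - l‖ < 1 ∧
      Real.log ((C * (1 - ‖t‖ ^ 2) ^ (((n₂ : ℝ) - d) / 2 - 1)) /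
        (C * (1 - ‖t - l‖ ^ 2) ^ (((n₂ : ℝ) - d) / 2 - 1))) ≤ ε / 2 := by
  have hn : (d : ℝ) + 3 ≤ n₂ := by exact_mod_cast hd
  have hn0 : (0 : ℝ) < n₂ := by linarith [d.cast_nonneg (α := ℝ)]
  set p := ((n₂ : ℝ) - d) / 2 - 1
  have hp : 0 ≤ p ∧ p ≤ n₂ / 2 := by
    constructor <;> simp only [p] <;> linarith [d.cast_nonneg (α := ℝ)]
  have hl_small : ‖l‖ ≤ 0.1 := hl.trans (min_le_left _ _)
  have hnl : n₂ * ‖l‖ ^ 2 ≤ (ε / 5) ^ 2 :=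
    mul_sq_le_of_le_div_sqrt hn0 (norm_nonneg l) (hl.trans (min_le_right _ _))
  have hip' : 2 * |⟪t, l⟫| ≤ ε / (25 * n₂) := by
    rw [show ε / (25 * n₂) = 2 * (ε / (50 * n₂)) by ring]; linarith
  have hgap := sq_norm_sub_sub_sq_norm_le t l
  have hε_n : ε / (25 * n₂) ≤ 1 / 75 := by
    rw [div_le_div_iff₀ (by positivity) (by norm_num)]; nlinarith
  have htl_sq : ‖t - l‖ ^ 2 ≤ 0.84 := by nlinarith [norm_nonneg t]
  have htl : ‖t - l‖ < 1 := by nlinarith [norm_nonneg (t - l)]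
  refine ⟨by linarith, htl, ?_⟩
  have hnum : p * (‖t - l‖ ^ 2 - ‖t‖ ^ 2) ≤ ε / 25 :=
    calc p * (‖t - l‖ ^ 2 - ‖t‖ ^ 2) ≤ p * (‖l‖ ^ 2 + ε / (25 * n₂)) :=
          mul_le_mul_of_nonneg_left (by linarith) hp.1
      _ ≤ n₂ / 2 * (‖l‖ ^ 2 + ε / (25 * n₂)) := by gcongr; exact hp.2
      _ = n₂ * ‖l‖ ^ 2 / 2 + ε / 50 := by field_simp; ring
      _ ≤ ε / 25 := by nlinarith
  calc _ ≤ p * ((‖t - l‖ ^ 2 - ‖t‖ ^ 2) / (1 - ‖t - l‖ ^ 2)) :=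
        log_sphereMarginalDensity_div_le hC.ne' hp.1 (by linarith) htl
    _ ≤ ε / 25 / (1 - ‖t - l‖ ^ 2) := by
        rw [← mul_div_assoc]; gcongr; linarith
    _ ≤ ε / 25 / 0.16 := by gcongr; linarith
    _ ≤ ε / 2 := by norm_num; linarith
end
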